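/- Let 0 < θ < 1/2, d > 1, 0 < a < 1, and let u be a C² solution on [0,∞) of u'' + ((d-1)/r)u' + f(u) = 0 with u(0) = a, u'(0) = 0, where f(s) = s - s|s|^{-2θ}. Then u(r) > a for all r > 0. -/

import Mathlib

open Real Set Topology

/-!
Along a solution, the energy `E = u'²/2 + F(u)`, with `F' = f` on `(0, ∞)`, satisfies
`E' = -(d-1)/r · u'²`, so it does not increase while `u` stays positive. Since `f < 0` on
`(0, 1)`, the flux `r^(d-1) u'` increases from `0`, so `u' > 0` and `E` strictly decreases
near `0`. At a first return `u(ζ) = a` we would get `F(a) ≤ E(ζ) < E(0) = F(a)`.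
-/

lemma self_sub_mul_rpow_neg_lt_zero {p s : ℝ} (hp : 0 < p) (hs : 0 < s) (hs1 : s < 1) :
    s - s * s ^ (-p) < 0 := by
  have : 1 < s ^ (-p) := one_lt_rpow_of_pos_of_lt_one_of_neg hs hs1 (neg_neg_of_pos hp)
  nlinarith

lemma hasDerivAt_sq_div_two_sub_rpow_div {p s : ℝ} (hp : p ≠ 2) (hs : 0 < s) :
    HasDerivAt (fun x => x ^ 2 / 2 - x ^ (2 - p) / (2 - p)) (s - s * s ^ (-p)) s := by
  have h2p : 2 - p ≠ 0 := sub_ne_zero.mpr hp.symm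
  refine (((hasDerivAt_pow 2 s).div_const 2).sub
    ((hasDerivAt_rpow_const (p := 2 - p) (Or.inl hs.ne')).div_const (2 - p))).congr_deriv ?_
  rw [show 2 - p - 1 = 1 + -p by ring, rpow_add hs, rpow_one]
  field_simp
  ring

section RadialEquation

variable {d : ℝ} {f F u : ℝ → ℝ}

noncomputable def radialEnergy (F u : ℝ → ℝ) (r : ℝ) : ℝ := deriv u r ^ 2 / 2 + F (u r)

lemma hasDerivAt_rpow_mul_deriv (hu : ContDiff ℝ 2 u)
    (hode : ∀ r, 0 < r → deriv (deriv u) r + (d - 1) / r * deriv u r + f (u r) = 0)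
    {r : ℝ} (hr : 0 < r) :
    HasDerivAt (fun r => r ^ (d - 1) * deriv u r) (-(r ^ (d - 1) * f (u r))) r := by
  refine ((hasDerivAt_rpow_const (p := d - 1) (Or.inl hr.ne')).mul
    (hu.differentiable_deriv_two r).hasDerivAt).congr_deriv ?_
  have hsplit : r ^ (d - 1) = r ^ (d - 1 - 1) * r := by
    rw [← rpow_add_one hr.ne']; ring_nf
  have := hode r hr
  rw [hsplit]
  field_simp at this
  linear_combination r ^ (d - 1 - 1) * this

lemma hasDerivAt_radialEnergy (hu : ContDiff ℝ 2 u)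
    (hode : ∀ r, 0 < r → deriv (deriv u) r + (d - 1) / r * deriv u r + f (u r) = 0)
    {r : ℝ} (hr : 0 < r) (hF : HasDerivAt F (f (u r)) (u r)) :
    HasDerivAt (radialEnergy F u) (-((d - 1) / r * deriv u r ^ 2)) r := by
  refine ((((hu.differentiable_deriv_two r).hasDerivAt.pow 2).div_const 2).add
    (hF.comp r (hu.differentiable (by norm_num) r).hasDerivAt)).congr_deriv ?_
  linear_combination deriv u r * hode r hr

lemma continuousOn_radialEnergy (hu : ContDiff ℝ 2 u) {s : Set ℝ}
    (hF : ∀ r ∈ s, ContinuousAt F (u r)) : ContinuousOn (radialEnergy F u) s :=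
  ((hu.continuous_deriv one_le_two).continuousOn.pow 2).div_const 2 |>.add
    fun r hr => (hF r hr).comp_continuousWithinAt hu.continuous.continuousWithinAt

lemma radialEnergy_antitoneOn (hd : 1 ≤ d) (hu : ContDiff ℝ 2 u)
    (hode : ∀ r, 0 < r → deriv (deriv u) r + (d - 1) / r * deriv u r + f (u r) = 0)
    {s t : ℝ} (hs : 0 ≤ s) (hF : ∀ r ∈ Icc s t, HasDerivAt F (f (u r)) (u r)) :
    AntitoneOn (radialEnergy F u) (Icc s t) := by
  have hE : ∀ r ∈ interior (Icc s t),
      HasDerivAt (radialEnergy F u) (-((d - 1) / r * deriv u r ^ 2)) r := by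
    rw [interior_Icc]
    exact fun r hr =>
      hasDerivAt_radialEnergy hu hode (hs.trans_lt hr.1) (hF r (Ioo_subset_Icc_self hr))
  refine antitoneOn_of_deriv_nonpos (convex_Icc s t)
    (continuousOn_radialEnergy hu fun r hr => (hF r hr).continuousAt)
    (fun r hr => (hE r hr).differentiableAt.differentiableWithinAt) fun r hr => ?_
  have hr0 : 0 < r := hs.trans_lt (by rw [interior_Icc] at hr; exact hr.1)
  rw [(hE r hr).deriv, neg_nonpos]
  exact mul_nonneg (div_nonneg (by linarith) hr0.le) (sq_nonneg _)

lemma radialEnergy_strictAntiOn (hd : 1 < d) (hu : ContDiff ℝ 2 u)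
    (hode : ∀ r, 0 < r → deriv (deriv u) r + (d - 1) / r * deriv u r + f (u r) = 0)
    {s t : ℝ} (hs : 0 ≤ s) (hF : ∀ r ∈ Icc s t, HasDerivAt F (f (u r)) (u r))
    (hu' : ∀ r ∈ Ioo s t, deriv u r ≠ 0) :
    StrictAntiOn (radialEnergy F u) (Icc s t) := by
  refine strictAntiOn_of_deriv_neg (convex_Icc s t)
    (continuousOn_radialEnergy hu fun r hr => (hF r hr).continuousAt) fun r hr => ?_
  rw [interior_Icc] at hr
  have hr0 : 0 < r := hs.trans_lt hr.1
  rw [(hasDerivAt_radialEnergy hu hode hr0 (hF r (Ioo_subset_Icc_self hr))).deriv, neg_lt_zero]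
  exact mul_pos (div_pos (by linarith) hr0) (sq_pos_of_ne_zero (hu' r hr))

lemma deriv_pos_of_forall_lt_zero (hd : 1 ≤ d) (hu : ContDiff ℝ 2 u)
    (hode : ∀ r, 0 < r → deriv (deriv u) r + (d - 1) / r * deriv u r + f (u r) = 0)
    (hu'0 : deriv u 0 = 0) {ε : ℝ} (hf : ∀ r ∈ Ioo 0 ε, f (u r) < 0) :
    ∀ r ∈ Ioc 0 ε, 0 < deriv u r := by
  have hmono : StrictMonoOn (fun r => r ^ (d - 1) * deriv u r) (Icc 0 ε) := by
    refine strictMonoOn_of_deriv_pos (convex_Icc 0 ε)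
      ((continuousOn_id.rpow_const fun _ _ => Or.inr (by linarith)).mul
        (hu.continuous_deriv one_le_two).continuousOn) fun r hr => ?_
    rw [interior_Icc] at hr
    rw [(hasDerivAt_rpow_mul_deriv hu hode hr.1).deriv, neg_pos]
    exact mul_neg_of_pos_of_neg (rpow_pos_of_pos hr.1 _) (hf r hr)
  intro r hr
  have := hmono ⟨le_rfl, hr.1.le.trans hr.2⟩ (Ioc_subset_Icc_self hr) hr.1
  simp only [hu'0, mul_zero] at this
  exact pos_of_mul_pos_right this (rpow_pos_of_pos hr.1 _).le

lemma exists_forall_deriv_pos_of_mem_nhds (hd : 1 ≤ d) (hu : ContDiff ℝ 2 u)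
    (hode : ∀ r, 0 < r → deriv (deriv u) r + (d - 1) / r * deriv u r + f (u r) = 0)
    (hu'0 : deriv u 0 = 0) {U : Set ℝ} (hU : U ∈ 𝓝 (u 0)) (hf : ∀ s ∈ U, f s < 0) :
    ∃ ε > 0, Icc 0 ε ⊆ u ⁻¹' U ∧ ∀ r ∈ Ioc 0 ε, 0 < deriv u r := by
  obtain ⟨ε, hε, hsub⟩ := mem_nhdsGE_iff_exists_Icc_subset.mp <|
    mem_nhdsWithin_of_mem_nhds <| hu.continuous.continuousAt.preimage_mem_nhds hU
  exact ⟨ε, hε, hsub, deriv_pos_of_forall_lt_zero hd hu hode hu'0 fun r hr =>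
    hf _ (hsub (Ioo_subset_Icc_self hr))⟩

end RadialEquation

lemma exists_first_return {u : ℝ → ℝ} {ε r₀ : ℝ} (hu : Continuous u) (hε : 0 < ε)
    (hmono : StrictMonoOn u (Icc 0 ε)) (hr₀ : 0 < r₀) (hur₀ : u r₀ ≤ u 0) :
    ∃ ζ, ε < ζ ∧ u ζ = u 0 ∧ ∀ r ∈ Ioo 0 ζ, u 0 < u r := by
  have hlt : ∀ r ∈ Ioc 0 ε, u 0 < u r := fun r hr =>
    hmono ⟨le_rfl, hε.le⟩ (Ioc_subset_Icc_self hr) hr.1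
  set S := Ici ε ∩ {r | u r ≤ u 0}
  have hSbdd : BddBelow S := ⟨ε, fun r hr => hr.1⟩
  have hr₀S : r₀ ∈ S := ⟨le_of_not_gt fun h => (hlt r₀ ⟨hr₀, h.le⟩).not_ge hur₀, hur₀⟩
  have hζS : sInf S ∈ S :=
    (isClosed_Ici.inter (isClosed_le hu continuous_const)).csInf_mem ⟨r₀, hr₀S⟩ hSbdd
  set ζ := sInf S
  have hεζ : ε < ζ := hζS.1.lt_of_ne fun h => (hlt ε ⟨hε, le_rfl⟩).not_ge (h ▸ hζS.2)
  have hbefore : ∀ r ∈ Ioo 0 ζ, u 0 < u r := by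
    rintro r ⟨hr0, hrζ⟩
    rcases le_or_gt r ε with h | h
    · exact hlt r ⟨hr0, h⟩
    · exact lt_of_not_ge fun hur => (csInf_le hSbdd ⟨h.le, hur⟩).not_gt hrζ
  have hclosure : closure (Ioo 0 ζ) ⊆ {r | u 0 ≤ u r} :=
    (isClosed_le continuous_const hu).closure_subset_iff.mpr fun r hr => (hbefore r hr).le
  rw [closure_Ioo (hε.trans hεζ).ne] at hclosure
  exact ⟨ζ, hεζ, le_antisymm hζS.2 (hclosure ⟨(hε.trans hεζ).le, le_rfl⟩), hbefore⟩

theorem stmt_7_general (θ d a : ℝ) (hθ : 0 < θ) (hθ' : θ < 1/2) (hd : 1 < d)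
    (ha0 : 0 < a) (ha1 : a < 1)
    (f : ℝ → ℝ) (hf : ∀ s : ℝ, s ≠ 0 → f s = s - s * |s| ^ (-(2*θ)))
    (u : ℝ → ℝ) (hu : ContDiff ℝ 2 u) (hu0 : u 0 = a) (hu'0 : deriv u 0 = 0)
    (hode : ∀ r : ℝ, 0 < r →
      deriv (deriv u) r + (d-1)/r * deriv u r + f (u r) = 0) :
    ∀ r : ℝ, 0 < r → a < u r := by
  have hf_pos : ∀ s, 0 < s → f s = s - s * s ^ (-(2 * θ)) := fun s hs => by
    rw [hf s hs.ne', abs_of_pos hs]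
  set F : ℝ → ℝ := fun x => x ^ 2 / 2 - x ^ (2 - 2 * θ) / (2 - 2 * θ)
  have hF : ∀ s, 0 < s → HasDerivAt F (f s) s :=
    fun s hs => hf_pos s hs ▸ hasDerivAt_sq_div_two_sub_rpow_div (by linarith) hs
  have hfneg : ∀ s ∈ Ioo 0 1, f s < 0 := fun s hs =>
    hf_pos s hs.1 ▸ self_sub_mul_rpow_neg_lt_zero (by linarith) hs.1 hs.2
  obtain ⟨ε, hε, hsmall, hu'⟩ := exists_forall_deriv_pos_of_mem_nhds hd.le hu hode hu'0
    (hu0 ▸ Ioo_mem_nhds ha0 ha1) hfneg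
  have hmono : StrictMonoOn u (Icc 0 ε) :=
    strictMonoOn_of_deriv_pos (convex_Icc 0 ε) hu.continuous.continuousOn fun x hx =>
      hu' x (Ioo_subset_Ioc_self (by rwa [interior_Icc] at hx))
  intro r₀ hr₀
  by_contra! hur₀
  obtain ⟨ζ, hεζ, huζ, hbefore⟩ := exists_first_return hu.continuous hε hmono hr₀ (hu0 ▸ hur₀)
  rw [hu0] at huζ hbefore
  have hpos : ∀ r ∈ Icc ε ζ, 0 < u r := by
    rintro r ⟨hεr, hrζ⟩
    rcases hrζ.eq_or_lt with rfl | hrζ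
    · rwa [huζ]
    · exact ha0.trans (hbefore r ⟨hε.trans_le hεr, hrζ⟩)
  have hE₁ := radialEnergy_strictAntiOn hd hu hode le_rfl (fun r hr => hF _ (hsmall hr).1)
    (fun r hr => (hu' r (Ioo_subset_Ioc_self hr)).ne') ⟨le_rfl, hε.le⟩ ⟨hε.le, le_rfl⟩ hε
  have hE₂ := radialEnergy_antitoneOn hd.le hu hode hε.le (fun r hr => hF _ (hpos r hr))
    ⟨le_rfl, hεζ.le⟩ ⟨hεζ.le, le_rfl⟩ hεζ.le
  have hE₃ : radialEnergy F u 0 ≤ radialEnergy F u ζ := by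
    simp only [radialEnergy, hu0, hu'0, huζ]
    linarith [sq_nonneg (deriv u ζ)]
  linarith

theorem stmt_7 (θ d a : ℝ) (hθ : 0 < θ) (hθ' : θ < 1/2) (hd : 1 < d)
    (ha0 : 0 < a) (ha1 : a < 1)
    (f : ℝ → ℝ) (hf : ∀ s : ℝ, s ≠ 0 → f s = s - s * |s| ^ (-(2*θ))) (hf0 : f 0 = 0)
    (u : ℝ → ℝ) (hu : ContDiff ℝ 2 u) (hu0 : u 0 = a) (hu'0 : deriv u 0 = 0)
    (hode : ∀ r : ℝ, 0 < r →
      deriv (deriv u) r + (d-1)/r * deriv u r + f (u r) = 0) :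
    ∀ r : ℝ, 0 < r → a < u r :=
  stmt_7_general θ d a hθ hθ' hd ha0 ha1 f hf u hu hu0 hu'0 hode
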